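/- For every continuous bounded complex cosine function of the form cos(at) and every discontinuous bounded complex cosine function (c(t))_{t∈ℝ}, one has sup_{t∈ℝ} |cos(at) − c(t)| = 2, and moreover limsup_{t→0} |cos(at) − c(t)| = 2. -/

import Mathlib

/-!
A bounded complex cosine function only takes values `cos θ` with `θ` real (along `t, 2t, 3t, …`
it follows `cos (n ζ)`, which is unbounded unless `ζ` is real), so it is a real cosine function
`r` with `|r| ≤ 1`. Such an `r` is continuous as soon as it is continuous at `0`, so when `r` is
discontinuous it has a cluster value `x ≠ 1` at `0`. The angles `θ` for which `cos θ` is a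
cluster value of `r` at `0` form a closed subgroup of `ℝ` containing `2π` and `arccos x`, and
the Chebyshev identity `r (k t) = cos (k φ)` for `r t = cos φ` rules out the cyclic case. Hence
the subgroup is `ℝ`, `cos π = -1` is a cluster value of `r` at `0`, and since `cos (a t) → 1`,
the distance `|cos (a t) - c t| ≤ 2` comes arbitrarily close to `2` near `0`.
-/

open Filter Topology Set Real

theorem MapClusterPt.exists_le_tendsto {α X : Type*} [TopologicalSpace X] {F : Filter α}
    {u : α → X} {x : X} (h : MapClusterPt x F u) :
    ∃ G ≤ F, G.NeBot ∧ Tendsto u G (𝓝 x) := by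
  refine ⟨F ⊓ comap u (𝓝 x), inf_le_left, ?_, tendsto_comap.mono_left inf_le_right⟩
  rw [← map_neBot_iff u, Filter.push_pull, inf_comm]
  exact h

theorem MapClusterPt.nhdsNE {X Y : Type*} [TopologicalSpace X] [TopologicalSpace Y] [T1Space Y]
    {f : X → Y} {x : X} {y : Y} (h : MapClusterPt y (𝓝 x) f) (hne : f x ≠ y) :
    MapClusterPt y (𝓝[≠] x) f := by
  rw [← nhdsNE_sup_pure, mapClusterPt_def, map_sup, clusterPt_sup] at h
  refine h.resolve_right ?_
  rw [map_pure, ← principal_singleton, ← mem_closure_iff_clusterPt, closure_singleton]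
  exact Ne.symm hne

theorem Real.limsup_eq_of_mapClusterPt {α : Type*} {F : Filter α} {f : α → ℝ} {b : ℝ}
    (hle : ∀ x, f x ≤ b) (hb : MapClusterPt b F f) : limsup f F = b := by
  have hcobdd : IsCoboundedUnder (· ≤ ·) F f :=
    .of_frequently_ge (hb.frequently (eventually_ge_nhds (sub_one_lt b)))
  exact le_antisymm (limsup_le_of_le hcobdd (.of_forall hle))
    (hb.le_limsup (isBoundedUnder_of ⟨b, hle⟩))

theorem Real.iSup_eq_of_mapClusterPt {α : Type*} {F : Filter α} {f : α → ℝ} {b : ℝ}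
    (hle : ∀ x, f x ≤ b) (hb : MapClusterPt b F f) : ⨆ x, f x = b := by
  obtain ⟨G, -, hG, -⟩ := hb.exists_le_tendsto
  have : Nonempty α := nonempty_of_neBot G
  refine (isLUB_of_mem_closure (forall_mem_range.2 hle) ?_).ciSup_eq
  rw [mem_closure_iff_clusterPt]
  exact hb.clusterPt.mono (map_le_iff_le_comap.2 (by simp))

theorem Real.cos_add_eq_or_eq_of_mul_eq {α β L : ℝ}
    (h : L * (2 * cos α * cos β - L) = cos α ^ 2 + cos β ^ 2 - 1) :
    cos (α + β) = L ∨ cos (α + β) = 2 * cos α * cos β - L := by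
  have hroot : (cos (α + β) - L) * (cos (α + β) - (2 * cos α * cos β - L)) = 0 := by
    rw [cos_add]
    linear_combination h + (cos β ^ 2 - 1 + 2 * sin β ^ 2) * sin_sq_add_cos_sq α +
      (2 - sin α ^ 2 - 2 * cos α ^ 2) * sin_sq_add_cos_sq β
  rcases mul_eq_zero.1 hroot with h | h
  exacts [.inl (sub_eq_zero.1 h), .inr (sub_eq_zero.1 h)]

/-- In the cyclic case `S = ℤ g` with `2π = m g`, every `ψ ∈ S` has `cos (|m| ψ) = 1`. -/
theorem AddSubgroup.pi_mem_of_isClosed {S : AddSubgroup ℝ} (hS : IsClosed (S : Set ℝ))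
    (h2π : 2 * π ∈ S) {θ : ℝ} (hθ : θ ∈ S) (hcos : cos θ ≠ 1)
    (hdiv : ∀ θ ∈ S, ∀ k : ℕ, k ≠ 0 → ∃ ψ ∈ S, cos (k * ψ) = cos θ) : π ∈ S := by
  rcases S.dense_or_cyclic with hdense | ⟨g, rfl⟩
  · rw [← SetLike.mem_coe, ← hS.closure_eq, hdense.closure_eq]
    trivial
  · exfalso
    obtain ⟨m, hm⟩ := AddSubgroup.mem_closure_singleton.1 h2π
    have hm0 : m ≠ 0 := by
      rintro rfl
      simp [pi_ne_zero] at hm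
    obtain ⟨ψ, hψ, hψθ⟩ := hdiv θ hθ m.natAbs (Int.natAbs_ne_zero.2 hm0)
    obtain ⟨j, rfl⟩ := AddSubgroup.mem_closure_singleton.1 hψ
    refine hcos (hψθ ▸ ?_)
    rw [zsmul_eq_mul] at hm
    rw [zsmul_eq_mul, Nat.cast_natAbs, Int.cast_abs]
    rcases abs_choice (m : ℝ) with h | h <;> rw [h]
    · rw [show (m : ℝ) * (j * g) = j * (2 * π) by rw [← hm]; ring]
      exact cos_int_mul_two_pi j
    · rw [show -(m : ℝ) * (j * g) = -(j * (2 * π)) by rw [← hm]; ring, cos_neg]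
      exact cos_int_mul_two_pi j

structure IsCosineFunction {G R : Type*} [AddGroup G] [CommRing R] (f : G → R) : Prop where
  map_zero : f 0 = 1
  map_add_add_map_sub : ∀ s t, f (s + t) + f (s - t) = 2 * f s * f t

theorem Real.isCosineFunction_cos : IsCosineFunction Real.cos :=
  ⟨Real.cos_zero, fun s t => by rw [Real.cos_add, Real.cos_sub]; ring⟩

theorem Complex.isCosineFunction_cos : IsCosineFunction Complex.cos :=
  ⟨Complex.cos_zero, fun s t => by rw [Complex.cos_add, Complex.cos_sub]; ring⟩

theorem Complex.abs_sinh_im_le_norm_cos (z : ℂ) : |Real.sinh z.im| ≤ ‖Complex.cos z‖ := by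
  have two_sinh_le (a b : ℂ) (hab : a + b = 2 * Complex.cos z) :
      ‖a‖ - ‖b‖ ≤ 2 * ‖Complex.cos z‖ := by
    simpa [hab] using norm_sub_le_norm_add a b
  have h₁ := two_sinh_le (Complex.exp (-z * I)) (Complex.exp (z * I)) (by rw [two_cos]; ring)
  have h₂ := two_sinh_le (Complex.exp (z * I)) (Complex.exp (-z * I)) (two_cos z).symm
  simp only [Complex.norm_exp, neg_mul, Complex.neg_re, Complex.mul_re, Complex.I_re,
    Complex.I_im, mul_zero, mul_one, zero_sub, neg_neg] at h₁ h₂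
  rw [abs_le, Real.sinh_eq]
  constructor <;> linarith

namespace IsCosineFunction

variable {G H R : Type*}

section AddGroup

variable [AddGroup G] [AddGroup H] [CommRing R] {f : G → R}

theorem map_add_two_nsmul (hf : IsCosineFunction f) (n : ℕ) (t : G) :
    f ((n + 2) • t) = 2 * f ((n + 1) • t) * f t - f (n • t) := by
  have := hf.map_add_add_map_sub ((n + 1) • t) t
  rw [← succ_nsmul, succ_nsmul t n, add_sub_cancel_right, ← succ_nsmul] at this
  linear_combination this

theorem map_nsmul_eq_of_eq (hf : IsCosineFunction f) {g : H → R} (hg : IsCosineFunction g)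
    {t : G} {u : H} (htu : f t = g u) (n : ℕ) : f (n • t) = g (n • u) := by
  induction n using Nat.twoStepInduction with
  | zero => simp [hf.map_zero, hg.map_zero]
  | one => simpa using htu
  | more n ih₀ ih₁ => rw [hf.map_add_two_nsmul, hg.map_add_two_nsmul, ih₀, ih₁, htu]

end AddGroup

section Field

variable [AddCommGroup G] [Field R] [CharZero R] {f : G → R}

theorem map_add_mul_map_sub (hf : IsCosineFunction f) (s t : G) :
    f (s + t) * f (s - t) = f s ^ 2 + f t ^ 2 - 1 := by
  have double (v : G) : f (v + v) = 2 * f v ^ 2 - 1 := by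
    have := hf.map_add_add_map_sub v v
    rw [sub_self, hf.map_zero] at this
    linear_combination this
  have := hf.map_add_add_map_sub (s + t) (s - t)
  rw [show s + t + (s - t) = s + s by abel, show s + t - (s - t) = t + t by abel,
    double, double] at this
  linear_combination -this / 2

end Field

section Continuity

variable [AddCommGroup G] [TopologicalSpace G] [IsTopologicalAddGroup G] {f : G → ℝ}

/-- The sum `f (s + h) + f (s - h)` tends to `2 f s` and the product to `f s ^ 2`,
so the difference tends to `0`. -/
theorem continuous_of_tendsto_nhds_zero (hf : IsCosineFunction f)
    (h0 : Tendsto f (𝓝 0) (𝓝 1)) : Continuous f := by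
  refine continuous_iff_continuousAt.2 fun s => ?_
  have hsum : Tendsto (fun h => f (s + h) + f (s - h)) (𝓝 0) (𝓝 (2 * f s)) := by
    have := h0.const_mul (2 * f s)
    rw [mul_one] at this
    exact this.congr fun h => (hf.map_add_add_map_sub s h).symm
  have hprod : Tendsto (fun h => f (s + h) * f (s - h)) (𝓝 0) (𝓝 (f s ^ 2)) := by
    have := ((h0.pow 2).const_add (f s ^ 2)).sub_const 1
    rw [one_pow, add_sub_cancel_right] at this
    exact this.congr fun h => (hf.map_add_mul_map_sub s h).symm
  have hdiff : Tendsto (fun h => f (s + h) - f (s - h)) (𝓝 0) (𝓝 0) := by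
    have hsq : Tendsto (fun h => (f (s + h) - f (s - h)) ^ 2) (𝓝 0) (𝓝 0) := by
      convert (hsum.pow 2).sub (hprod.const_mul 4) using 1 <;> ring_nf
    refine (tendsto_zero_iff_abs_tendsto_zero _).2 ?_
    simpa only [Function.comp_def, Real.sqrt_sq_eq_abs, Real.sqrt_zero] using hsq.sqrt
  have : Tendsto (fun h => f (s + h)) (𝓝 0) (𝓝 (f s)) := by
    convert (hsum.add hdiff).div_const 2 using 1 <;> ring_nf
  rwa [ContinuousAt, ← map_add_left_nhds_zero, tendsto_map'_iff]

end Continuity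

section Complex

variable [AddGroup G] {f : G → ℂ}

theorem exists_eq_ofReal_cos (hf : IsCosineFunction f) (hb : ∃ M, ∀ t, ‖f t‖ ≤ M) (t : G) :
    ∃ θ : ℝ, f t = Real.cos θ := by
  obtain ⟨M, hM⟩ := hb
  obtain ⟨ζ, hζ⟩ := Complex.cos_surjective (f t)
  have hbound (n : ℕ) : n * |ζ.im| ≤ M := by
    have hn := hf.map_nsmul_eq_of_eq Complex.isCosineFunction_cos hζ.symm n
    calc (n : ℝ) * |ζ.im| = |(n • ζ).im| := by simp [abs_mul]
      _ ≤ |Real.sinh (n • ζ).im| := by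
        rw [Real.abs_sinh]; exact Real.self_le_sinh_iff.2 (abs_nonneg _)
      _ ≤ ‖f (n • t)‖ := hn ▸ Complex.abs_sinh_im_le_norm_cos _
      _ ≤ M := hM _
  have him : ζ.im = 0 := by
    by_contra hne
    obtain ⟨n, hn⟩ := exists_nat_gt (M / |ζ.im|)
    have := hbound n
    rw [div_lt_iff₀ (abs_pos.2 hne)] at hn
    linarith
  refine ⟨ζ.re, ?_⟩
  rw [← hζ, Complex.ofReal_cos]
  congr 1
  exact Complex.ext (by simp) (by simp [him])

end Complex

section Real

variable {r : ℝ → ℝ}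

theorem mapClusterPt_one (hr : IsCosineFunction r) : MapClusterPt 1 (𝓝 0) r :=
  hr.map_zero ▸ (tendsto_pure_nhds r 0).mapClusterPt.mono (pure_le_nhds 0)

/-- Along a common refinement, `r (u + v)` and `r (u - v)` have sum tending to
`2 cos α cos β` and product tending to `cos α ^ 2 + cos β ^ 2 - 1`, the sum and product of
`cos (α + β)` and `cos (α - β)`. -/
theorem mapClusterPt_cos_add (hr : IsCosineFunction r) (hb : ∀ t, r t ∈ Icc (-1) 1) {α β : ℝ}
    (hα : MapClusterPt (cos α) (𝓝 0) r) (hβ : MapClusterPt (cos β) (𝓝 0) r) :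
    MapClusterPt (cos (α + β)) (𝓝 0) r := by
  obtain ⟨Fα, hFα, _, hrα⟩ := hα.exists_le_tendsto
  obtain ⟨Fβ, hFβ, _, hrβ⟩ := hβ.exists_le_tendsto
  obtain ⟨L, -, hL⟩ := isCompact_Icc.exists_mapClusterPt (f := Fα ×ˢ Fβ)
    (u := fun p => r (p.1 + p.2)) (tendsto_principal.2 (.of_forall fun _ => hb _))
  obtain ⟨G, hG, _, hrL⟩ := hL.exists_le_tendsto
  have hu : Tendsto Prod.fst G Fα := tendsto_fst.mono_left hG
  have hv : Tendsto Prod.snd G Fβ := tendsto_snd.mono_left hG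
  have hru : Tendsto (fun p => r p.1) G (𝓝 (cos α)) := hrα.comp hu
  have hrv : Tendsto (fun p => r p.2) G (𝓝 (cos β)) := hrβ.comp hv
  have hrL' : Tendsto (fun p => r (p.1 - p.2)) G (𝓝 (2 * cos α * cos β - L)) :=
    ((hru.const_mul 2).mul hrv |>.sub hrL).congr fun p => by
      linear_combination -hr.map_add_add_map_sub p.1 p.2
  have hprod : L * (2 * cos α * cos β - L) = cos α ^ 2 + cos β ^ 2 - 1 := by
    have h := (hrL.mul hrL').congr fun p : ℝ × ℝ => hr.map_add_mul_map_sub p.1 p.2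
    exact tendsto_nhds_unique h (((hru.pow 2).add (hrv.pow 2)).sub_const 1)
  have hu0 : Tendsto Prod.fst G (𝓝 0) := hu.mono_right hFα
  have hv0 : Tendsto Prod.snd G (𝓝 0) := hv.mono_right hFβ
  rcases cos_add_eq_or_eq_of_mul_eq hprod with h | h <;> rw [h]
  · exact hrL.mapClusterPt.of_comp (by simpa using hu0.add hv0)
  · exact hrL'.mapClusterPt.of_comp (by simpa using hu0.sub hv0)

theorem exists_mapClusterPt_cos_eq_cos_mul (hr : IsCosineFunction r) (hb : ∀ t, r t ∈ Icc (-1) 1)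
    {x : ℝ} (hx : MapClusterPt x (𝓝 0) r) {k : ℕ} (hk : k ≠ 0) :
    ∃ ψ, MapClusterPt (cos ψ) (𝓝 0) r ∧ cos (k * ψ) = x := by
  obtain ⟨F, hF, _, hrx⟩ := hx.exists_le_tendsto
  obtain ⟨y, hy, hyc⟩ := isCompact_Icc.exists_mapClusterPt (f := F)
    (u := fun t => r (t / k)) (tendsto_principal.2 (.of_forall fun _ => hb _))
  obtain ⟨G, hG, _, hry⟩ := hyc.exists_le_tendsto
  have hcheb (t : ℝ) : r t = cos (k * arccos (r (t / k))) := by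
    have := hr.map_nsmul_eq_of_eq isCosineFunction_cos
      (cos_arccos (hb (t / k)).1 (hb (t / k)).2).symm k
    rwa [nsmul_eq_mul, nsmul_eq_mul, mul_div_cancel₀ _ (Nat.cast_ne_zero.2 hk)] at this
  refine ⟨arccos y, ?_, ?_⟩
  · rw [cos_arccos hy.1 hy.2]
    refine hry.mapClusterPt.of_comp ?_
    simpa using ((tendsto_id'.2 (hG.trans hF)).div_const (k : ℝ))
  · refine tendsto_nhds_unique ?_ ((hrx.mono_left hG).congr hcheb)
    exact (continuous_cos.tendsto _).comp
      (((continuous_arccos.tendsto y).comp hry).const_mul (k : ℝ))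

theorem mapClusterPt_neg_one_nhdsNE (hr : IsCosineFunction r) (hb : ∀ t, r t ∈ Icc (-1) 1)
    (hc : ¬ Continuous r) : MapClusterPt (-1) (𝓝[≠] 0) r := by
  obtain ⟨x, hx, hx1⟩ : ∃ x, MapClusterPt x (𝓝 0) r ∧ x ≠ 1 := by
    by_contra! h
    exact hc (hr.continuous_of_tendsto_nhds_zero (isCompact_Icc.tendsto_nhds_of_unique_mapClusterPt
      (.of_forall hb) fun x _ hx => h x hx))
  have hxI := isClosed_Icc.mem_of_mapClusterPt hx (.of_forall hb)
  let S : AddSubgroup ℝ :=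
    { carrier := {θ | MapClusterPt (cos θ) (𝓝 0) r}
      add_mem' := hr.mapClusterPt_cos_add hb
      zero_mem' := by simpa using hr.mapClusterPt_one
      neg_mem' := by simp }
  have hπ : π ∈ S := by
    refine S.pi_mem_of_isClosed (isClosed_setOfPred_clusterPt.preimage continuous_cos) ?_
      (θ := arccos x) ?_ ?_ fun θ hθ k hk => hr.exists_mapClusterPt_cos_eq_cos_mul hb hθ hk
    · show MapClusterPt (cos (2 * π)) (𝓝 0) r
      simpa using hr.mapClusterPt_one
    · show MapClusterPt (cos (arccos x)) (𝓝 0) r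
      rwa [cos_arccos hxI.1 hxI.2]
    · rwa [cos_arccos hxI.1 hxI.2]
  have h : MapClusterPt (cos π) (𝓝 0) r := hπ
  rw [cos_pi] at h
  exact h.nhdsNE (by norm_num [hr.map_zero])

end Real

end IsCosineFunction

theorem stmt_11 (a : ℝ) (c : ℝ → ℂ) (hc0 : c 0 = 1)
    (hc : ∀ s t : ℝ, c (s + t) + c (s - t) = 2 * c s * c t)
    (hb : ∃ M : ℝ, ∀ t : ℝ, ‖c t‖ ≤ M)
    (hdisc : ¬ Continuous c) :
    (⨆ t : ℝ, ‖((Real.cos (a * t) : ℝ) : ℂ) - c t‖) = 2 ∧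
    Filter.limsup (fun t : ℝ => ‖((Real.cos (a * t) : ℝ) : ℂ) - c t‖)
      (nhdsWithin (0 : ℝ) {(0 : ℝ)}ᶜ) = 2 := by
  choose θ hθ using IsCosineFunction.exists_eq_ofReal_cos ⟨hc0, hc⟩ hb
  obtain ⟨r, hr1, rfl⟩ : ∃ r : ℝ → ℝ, (∀ t, r t ∈ Icc (-1) 1) ∧ c = fun t => (r t : ℂ) :=
    ⟨fun t => cos (θ t), fun t => cos_mem_Icc _, funext hθ⟩
  simp only at hc0 hc
  have hr : IsCosineFunction r := ⟨by exact_mod_cast hc0, fun s t => by exact_mod_cast hc s t⟩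
  have hnorm (t : ℝ) : ‖((cos (a * t) : ℝ) : ℂ) - r t‖ = |cos (a * t) - r t| := by
    rw [← Complex.ofReal_sub, Complex.norm_real, Real.norm_eq_abs]
  have hle (t : ℝ) : ‖((cos (a * t) : ℝ) : ℂ) - r t‖ ≤ 2 := by
    rw [hnorm]
    linarith [abs_sub (cos (a * t)) (r t), abs_cos_le_one (a * t), abs_le.2 (hr1 t)]
  have hcluster : MapClusterPt 2 (𝓝[≠] 0) fun t => ‖((cos (a * t) : ℝ) : ℂ) - r t‖ := by
    obtain ⟨G, hG, _, hrG⟩ := (hr.mapClusterPt_neg_one_nhdsNE hr1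
      fun h => hdisc (Complex.continuous_ofReal.comp h)).exists_le_tendsto
    have hcosG : Tendsto (fun t => cos (a * t)) G (𝓝 1) :=
      ((by fun_prop : Continuous fun t => cos (a * t)).tendsto' 0 1 (by simp)).mono_left
        (hG.trans nhdsWithin_le_nhds)
    have hdiff := (hcosG.sub hrG).abs
    rw [show |(1 : ℝ) - -1| = 2 by norm_num] at hdiff
    exact (hdiff.congr fun t => (hnorm t).symm).mapClusterPt.mono hG
  exact ⟨Real.iSup_eq_of_mapClusterPt hle hcluster, Real.limsup_eq_of_mapClusterPt hle hcluster⟩
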